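/- Let k ≥ 2 and let m_1, …, m_k be integers with m_k ≢ 0 (mod n). Then I(m_1, …, m_k) = −∑_{i=1}^{k−1} I(m_1, …, m_{i−1}, m_i + m_k, m_{i+1}, …, m_{k−1}), where on the right the i-th summand is the exponential sum with k−1 arguments obtained from (m_1,…,m_{k−1}) by replacing m_i with m_i + m_k. -/

import Mathlib

/-!
With `ζ = exp(2πi/n)`, split an injective tuple `(j_1, …, j_k)` into its first `k - 1` entries
and the last one. For fixed `(j_1, …, j_{k-1})`, the sum over the admissible `j_k`, i.e. those
outside `{j_1, …, j_{k-1}}`, is the full sum over `j_k ∈ ℤ/nℤ` minus the `k - 1` terms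
`j_k = j_i`. The full sum is a geometric sum of the nontrivial `n`-th root of unity `ζ ^ m_k`,
hence vanishes, and the term `j_k = j_i` is exactly a summand of `I` with `m_i` replaced by
`m_i + m_k`.
-/

open Finset

noncomputable section

/-- The exponential sum `I(m_1, …, m_k) = ∑ exp(2πi(m_1 j_1 + … + m_k j_k)/n)`,
the sum being taken over all `k`-tuples `(j_1, …, j_k)` of pairwise distinct
elements of `ℤ/nℤ` (represented by `Fin n`). -/
def expSum (n : ℕ) (k : ℕ) (m : Fin k → ℤ) : ℂ :=
  ∑ t ∈ Finset.univ.filter (fun t : Fin k → Fin n => Function.Injective t),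
    Complex.exp (2 * Real.pi * Complex.I * (∑ i, (m i : ℂ) * ((t i : ℕ) : ℂ)) / n)

open Function

theorem sum_injective_fin_succ {α M : Type*} [Fintype α] [DecidableEq α] [AddCommMonoid M]
    (k : ℕ) (f : (Fin (k + 1) → α) → M) :
    ∑ t ∈ univ.filter (fun t : Fin (k + 1) → α => Injective t), f t =
      ∑ s ∈ univ.filter (fun s : Fin k → α => Injective s),
        ∑ j ∈ (univ.image s)ᶜ, f (Fin.snoc s j) := by
  rw [sum_sigma']
  symm
  refine sum_nbij' (fun p => Fin.snoc p.1 p.2) (fun t => ⟨Fin.init t, t (Fin.last k)⟩)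
    ?_ ?_ ?_ ?_ (fun _ _ => rfl)
  · rintro ⟨s, j⟩
    simp [Fin.snoc_injective_iff]
  · intro t ht
    rw [mem_filter, ← Fin.snoc_init_self t, Fin.snoc_injective_iff] at ht
    simpa using ht
  · rintro ⟨s, j⟩ -
    simp
  · exact fun t _ => Fin.snoc_init_self t

theorem sum_update_add_mul {R ι : Type*} [CommSemiring R] [Fintype ι] [DecidableEq ι]
    (c x : ι → R) (i : ι) (a : R) :
    ∑ l, update c i (c i + a) l * x l = ∑ l, c l * x l + a * x i := by
  have hterm (l : ι) :
      update c i (c i + a) l * x l = c l * x l + (Pi.single i (a * x i) : ι → R) l := by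
    rcases eq_or_ne l i with rfl | h <;> simp [*, add_mul]
  simp only [hterm, sum_add_distrib, Fintype.sum_pi_single']

theorem IsPrimitiveRoot.sum_zpow_mul_eq_zero {K : Type*} [Field K] {ζ : K} {n : ℕ}
    (hζ : IsPrimitiveRoot ζ n) {a : ℤ} (ha : ¬ (n : ℤ) ∣ a) :
    ∑ j : Fin n, ζ ^ (a * (j : ℕ)) = 0 := by
  have hne : ζ ^ a ≠ 1 := fun h => ha ((hζ.zpow_eq_one_iff_dvd a).mp h)
  have hpow : (ζ ^ a) ^ n = 1 := by
    rw [← zpow_natCast, ← zpow_mul, mul_comm, zpow_mul, zpow_natCast, hζ.pow_eq_one, one_zpow]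
  simp_rw [zpow_mul, zpow_natCast]
  rw [Fin.sum_univ_eq_sum_range (fun j => (ζ ^ a) ^ j), geom_sum_eq hne, hpow, sub_self, zero_div]

section RootSum

variable {K : Type*} [Field K]

def rootSum (n : ℕ) (ζ : K) (k : ℕ) (m : Fin k → ℤ) : K :=
  ∑ t ∈ univ.filter (fun t : Fin k → Fin n => Injective t), ζ ^ (∑ i, m i * ((t i : ℕ) : ℤ))

theorem expSum_eq_rootSum (n k : ℕ) (m : Fin k → ℤ) :
    expSum n k m = rootSum n (Complex.exp (2 * Real.pi * Complex.I / n)) k m := by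
  refine sum_congr rfl fun t _ => ?_
  rw [← Complex.exp_int_mul]
  push_cast
  ring_nf

theorem rootSum_succ {n : ℕ} {ζ : K} (hζ : IsPrimitiveRoot ζ n) {k : ℕ} (m : Fin (k + 1) → ℤ)
    (hm : ¬ (n : ℤ) ∣ m (Fin.last k)) :
    rootSum n ζ (k + 1) m = -∑ i : Fin k, rootSum n ζ k
      (update (fun l => m l.castSucc) i (m i.castSucc + m (Fin.last k))) := by
  set a := m (Fin.last k)
  set c : Fin k → ℤ := fun l => m l.castSucc
  set g : (Fin k → Fin n) → Fin n → K := fun s j => ζ ^ (∑ l, c l * ((s l : ℕ) : ℤ) + a * (j : ℕ))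
  have hphase (s : Fin k → Fin n) (j : Fin n) :
      ∑ l, m l * (((Fin.snoc s j : Fin (k + 1) → Fin n) l : ℕ) : ℤ) =
        ∑ l, c l * ((s l : ℕ) : ℤ) + a * (j : ℕ) := by
    simp [Fin.sum_univ_castSucc, c, a]
  have hfull (s : Fin k → Fin n) : ∑ j, g s j = 0 := by
    rcases eq_or_ne n 0 with rfl | hn
    · simp
    simp only [g, zpow_add₀ (hζ.ne_zero hn), ← mul_sum, hζ.sum_zpow_mul_eq_zero hm, mul_zero]
  have hmissing {s : Fin k → Fin n} (hs : Injective s) :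
      ∑ j ∈ (univ.image s)ᶜ, g s j = -∑ i, g s (s i) := by
    rw [eq_neg_iff_add_eq_zero, ← sum_image fun i _ j _ h => hs h, sum_compl_add_sum, hfull]
  calc rootSum n ζ (k + 1) m
      = ∑ s ∈ univ.filter (fun s : Fin k → Fin n => Injective s),
          ∑ j ∈ (univ.image s)ᶜ, g s j := by
        simp only [rootSum, sum_injective_fin_succ, hphase, g]
    _ = ∑ s ∈ univ.filter (fun s : Fin k → Fin n => Injective s), -∑ i, g s (s i) :=
        sum_congr rfl fun s hs => hmissing (mem_filter.mp hs).2
    _ = _ := by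
        rw [sum_neg_distrib, sum_comm]
        simp only [rootSum, sum_update_add_mul, g, c]

end RootSum

/-- If `k ≥ 2` and `m_k ≢ 0 (mod n)`, then
`I(m_1, …, m_k) = −∑_{i=1}^{k−1} I(m_1, …, m_i + m_k, …, m_{k−1})`. -/
theorem expSum_recursion (n : ℕ) (hn : 3 ≤ n) (k : ℕ) (m : Fin (k + 2) → ℤ)
    (hm : ¬ (n : ℤ) ∣ m (Fin.last (k + 1))) :
    expSum n (k + 2) m =
      - ∑ i : Fin (k + 1),
          expSum n (k + 1)
            (Function.update (fun l : Fin (k + 1) => m l.castSucc) i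
              (m i.castSucc + m (Fin.last (k + 1)))) := by
  simp only [expSum_eq_rootSum]
  exact rootSum_succ (Complex.isPrimitiveRoot_exp n (by omega)) m hm
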